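/- Let $q_0 \in \mathbb{R}$ and $q \in \mathbb{R}^3$ satisfy $q_0^2 + \|q\|^2 = 1$ and $q_0 \neq 0$, let $\Gamma = \tfrac{1}{2}(q_0 I_3 + q^{\times})$, let $M_\omega > 0$ and $P_b \in (0,1)$, and define $\omega_v = -\frac{|q_0| M_\omega}{2\sqrt{3}}\,\Gamma^{-1}\,\big(\mathrm{psat}(q_1), \mathrm{psat}(q_2), \mathrm{psat}(q_3)\big)$. Then $\|\omega_v\| \le M_\omega$. -/

import Mathlib

open Matrix

/-- The cross-product (skew-symmetric) matrix `q^×` of `q ∈ ℝ³`. -/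
def crossMat (q : EuclideanSpace ℝ (Fin 3)) : Matrix (Fin 3) (Fin 3) ℝ :=
  !![0, -q 2, q 1; q 2, 0, -q 0; -q 1, q 0, 0]

/-- The piecewise saturation function `psat` of the paper, with parameter `Pb ∈ (0,1)`,
segment coefficients `a_p = 1/(Pb² - 1)` and `K_m = -a_p (Pb - 1)²/Pb`. -/
noncomputable def psat (Pb x : ℝ) : ℝ :=
  if x < -Pb then -(1 / (Pb ^ 2 - 1)) * (x + 1) ^ 2 - 1
  else if x ≤ Pb then (-(1 / (Pb ^ 2 - 1)) * (Pb - 1) ^ 2 / Pb) * x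
  else (1 / (Pb ^ 2 - 1)) * (x - 1) ^ 2 + 1

/-! `Γ w = (q₀ w + q × w) / 2` with `q × w ⊥ w`, so Pythagoras gives `‖Γ w‖ ≥ |q₀| ‖w‖ / 2`;
hence `Γ` is invertible for `q₀ ≠ 0` and `|q₀| ‖Γ⁻¹ v‖ ≤ 2 ‖v‖`. Each `|psat(qᵢ)| ≤ 1`, so
`‖psat(q)‖ ≤ √3`, and the gain `|q₀| M_ω / (2√3)` cancels exactly these two factors. -/

open WithLp

theorem sq_div_one_sub_sq_mem_Icc {Pb s : ℝ} (hPb : Pb ∈ Set.Ioo 0 1) (hs₀ : 0 ≤ s)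
    (hs : s ≤ 1 - Pb) : s ^ 2 / (1 - Pb ^ 2) ∈ Set.Icc 0 1 := by
  obtain ⟨hPb₀, hPb₁⟩ := hPb
  have hden : 0 < 1 - Pb ^ 2 := by nlinarith
  exact ⟨by positivity, (div_le_one hden).2 (by nlinarith)⟩

theorem psat_abs_le_one {Pb x : ℝ} (hPb : Pb ∈ Set.Ioo 0 1) (hx : |x| ≤ 1) :
    |psat Pb x| ≤ 1 := by
  obtain ⟨hx₁, hx₂⟩ := abs_le.1 hx
  have ha : 1 / (Pb ^ 2 - 1) = -1 / (1 - Pb ^ 2) := by rw [← neg_sub, div_neg, neg_div]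
  rw [psat, ha]
  split_ifs with hlow hmid
  · obtain ⟨h₀, h₁⟩ := sq_div_one_sub_sq_mem_Icc hPb (s := x + 1) (by linarith) (by linarith)
    rw [show -(-1 / (1 - Pb ^ 2)) * (x + 1) ^ 2 = (x + 1) ^ 2 / (1 - Pb ^ 2) by ring, abs_le]
    constructor <;> linarith
  · obtain ⟨h₀, h₁⟩ := sq_div_one_sub_sq_mem_Icc hPb (s := 1 - Pb) (by linarith [hPb.2]) le_rfl
    have hxPb : |x / Pb| ≤ 1 := by
      rw [abs_div, abs_of_pos hPb.1, div_le_one hPb.1, abs_le]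
      exact ⟨by linarith, hmid⟩
    rw [show -(-1 / (1 - Pb ^ 2)) * (Pb - 1) ^ 2 / Pb * x
        = (1 - Pb) ^ 2 / (1 - Pb ^ 2) * (x / Pb) by ring, abs_mul, abs_of_nonneg h₀]
    exact mul_le_one₀ h₁ (abs_nonneg _) hxPb
  · obtain ⟨h₀, h₁⟩ := sq_div_one_sub_sq_mem_Icc hPb (s := 1 - x) (by linarith) (by linarith)
    rw [show -1 / (1 - Pb ^ 2) * (x - 1) ^ 2 + 1 = 1 - (1 - x) ^ 2 / (1 - Pb ^ 2) by ring,
      abs_le]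
    constructor <;> linarith

theorem norm_le_norm_add_of_inner_eq_zero {F : Type*} [NormedAddCommGroup F]
    [InnerProductSpace ℝ F] {x y : F} (h : inner ℝ x y = 0) : ‖x‖ ≤ ‖x + y‖ := by
  have hxy := norm_add_sq_eq_norm_sq_add_norm_sq_real h
  exact (mul_self_le_mul_self_iff (norm_nonneg _) (norm_nonneg _)).2 <| by
    nlinarith [mul_self_nonneg ‖y‖]

theorem norm_toLp_le_sqrt_card {ι : Type*} [Fintype ι] {x : ι → ℝ} (hx : ∀ i, |x i| ≤ 1) :
    ‖toLp 2 x‖ ≤ √(Fintype.card ι) := by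
  rw [EuclideanSpace.norm_eq]
  refine Real.sqrt_le_sqrt ?_
  calc ∑ i, ‖x i‖ ^ 2 ≤ ∑ _i : ι, (1 : ℝ) :=
        Finset.sum_le_sum fun i _ => pow_le_one₀ (norm_nonneg _) (hx i)
    _ = Fintype.card ι := by simp

theorem crossMat_mulVec (q : EuclideanSpace ℝ (Fin 3)) (w : Fin 3 → ℝ) :
    crossMat q *ᵥ w = q.ofLp ⨯₃ w := by
  ext i
  fin_cases i <;> simp [crossMat, cross_apply, mulVec, dotProduct, Fin.sum_univ_three] <;> ring

noncomputable def kinematicsJacobian (q0 : ℝ) (q : EuclideanSpace ℝ (Fin 3)) :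
    Matrix (Fin 3) (Fin 3) ℝ :=
  (1 / 2 : ℝ) • (q0 • (1 : Matrix (Fin 3) (Fin 3) ℝ) + crossMat q)

theorem kinematicsJacobian_mulVec (q0 : ℝ) (q : EuclideanSpace ℝ (Fin 3)) (w : Fin 3 → ℝ) :
    kinematicsJacobian q0 q *ᵥ w = (1 / 2 : ℝ) • (q0 • w + q.ofLp ⨯₃ w) := by
  rw [kinematicsJacobian, smul_mulVec, add_mulVec, smul_mulVec, one_mulVec, crossMat_mulVec]

theorem abs_mul_norm_le_two_mul_norm_kinematicsJacobian_mulVec (q0 : ℝ)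
    (q : EuclideanSpace ℝ (Fin 3)) (w : Fin 3 → ℝ) :
    |q0| * ‖toLp 2 w‖ ≤ 2 * ‖toLp 2 (kinematicsJacobian q0 q *ᵥ w)‖ := by
  have horth : inner ℝ (toLp 2 (q0 • w)) (toLp 2 (q.ofLp ⨯₃ w)) = 0 := by
    rw [EuclideanSpace.inner_toLp_toLp, star_trivial, dotProduct_comm, smul_dotProduct,
      dot_cross_self, smul_zero]
  calc |q0| * ‖toLp 2 w‖ = ‖toLp 2 (q0 • w)‖ := by
        rw [toLp_smul, norm_smul, Real.norm_eq_abs]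
    _ ≤ ‖toLp 2 (q0 • w) + toLp 2 (q.ofLp ⨯₃ w)‖ := norm_le_norm_add_of_inner_eq_zero horth
    _ = 2 * ‖toLp 2 (kinematicsJacobian q0 q *ᵥ w)‖ := by
        rw [kinematicsJacobian_mulVec, toLp_smul 2 (1 / 2 : ℝ), toLp_add, norm_smul,
          Real.norm_eq_abs, abs_of_pos one_half_pos]
        ring

theorem isUnit_kinematicsJacobian {q0 : ℝ} (hq0 : q0 ≠ 0) (q : EuclideanSpace ℝ (Fin 3)) :
    IsUnit (kinematicsJacobian q0 q) := by
  refine mulVec_injective_iff_isUnit.1 fun x y hxy => sub_eq_zero.1 ?_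
  have h := abs_mul_norm_le_two_mul_norm_kinematicsJacobian_mulVec q0 q (x - y)
  rw [mulVec_sub, hxy, sub_self, toLp_zero, norm_zero, mul_zero] at h
  exact (toLp_eq_zero 2).1 <| norm_le_zero_iff.1 <| nonpos_of_mul_nonpos_right h (abs_pos.2 hq0)

theorem abs_mul_norm_inv_kinematicsJacobian_mulVec_le (q0 : ℝ) (q : EuclideanSpace ℝ (Fin 3))
    (v : Fin 3 → ℝ) :
    |q0| * ‖toLp 2 ((kinematicsJacobian q0 q)⁻¹ *ᵥ v)‖ ≤ 2 * ‖toLp 2 v‖ := by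
  rcases eq_or_ne q0 0 with rfl | hq0
  · simp
  have hinv := mul_nonsing_inv _ ((isUnit_iff_isUnit_det _).1 (isUnit_kinematicsJacobian hq0 q))
  simpa [mulVec_mulVec, hinv] using
    abs_mul_norm_le_two_mul_norm_kinematicsJacobian_mulVec q0 q ((kinematicsJacobian q0 q)⁻¹ *ᵥ v)

theorem virtual_control_norm_bound_general (q0 : ℝ) (q : EuclideanSpace ℝ (Fin 3))
    (hunit : q0 ^ 2 + ‖q‖ ^ 2 = 1)
    (Γ : Matrix (Fin 3) (Fin 3) ℝ)
    (hΓ : Γ = (1 / 2 : ℝ) • (q0 • (1 : Matrix (Fin 3) (Fin 3) ℝ) + crossMat q))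
    (Mω Pb : ℝ) (hMω : 0 < Mω) (hPb : Pb ∈ Set.Ioo (0 : ℝ) 1)
    (ωv : EuclideanSpace ℝ (Fin 3))
    (hωv : ωv = (-(|q0| * Mω / (2 * Real.sqrt 3))) •
        Matrix.toEuclideanCLM (𝕜 := ℝ) Γ⁻¹
          ((WithLp.equiv 2 (Fin 3 → ℝ)).symm (fun i => psat Pb (q i)))) :
    ‖ωv‖ ≤ Mω := by
  set v : Fin 3 → ℝ := fun i => psat Pb (q i)
  have hq : ‖q‖ ≤ 1 := by nlinarith [norm_nonneg q]
  have hv : ‖toLp 2 v‖ ≤ √3 := by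
    simpa using norm_toLp_le_sqrt_card fun i =>
      psat_abs_le_one hPb ((PiLp.norm_apply_le q i).trans hq)
  have hΓv := abs_mul_norm_inv_kinematicsJacobian_mulVec_le q0 q v
  rw [show kinematicsJacobian q0 q = Γ from hΓ.symm] at hΓv
  calc ‖ωv‖ = Mω / (2 * √3) * (|q0| * ‖toLp 2 (Γ⁻¹ *ᵥ v)‖) := by
        rw [hωv, equiv_symm_apply, toEuclideanCLM_toLp, norm_smul, norm_neg, Real.norm_eq_abs,
          abs_of_nonneg (by positivity)]
        ring
    _ ≤ Mω / (2 * √3) * (2 * √3) :=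
        mul_le_mul_of_nonneg_left (hΓv.trans (by linarith)) (by positivity)
    _ = Mω := by field_simp

/-- Remark 1 of the paper: the virtual control law
`ω_v = -(|q₀| M_ω/(2√3)) Γ⁻¹ psat(q)` satisfies `‖ω_v‖ ≤ M_ω`. -/
theorem virtual_control_norm_bound (q0 : ℝ) (q : EuclideanSpace ℝ (Fin 3))
    (hunit : q0 ^ 2 + ‖q‖ ^ 2 = 1) (hq0 : q0 ≠ 0)
    (Γ : Matrix (Fin 3) (Fin 3) ℝ)
    (hΓ : Γ = (1 / 2 : ℝ) • (q0 • (1 : Matrix (Fin 3) (Fin 3) ℝ) + crossMat q))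
    (Mω Pb : ℝ) (hMω : 0 < Mω) (hPb : Pb ∈ Set.Ioo (0 : ℝ) 1)
    (ωv : EuclideanSpace ℝ (Fin 3))
    (hωv : ωv = (-(|q0| * Mω / (2 * Real.sqrt 3))) •
        Matrix.toEuclideanCLM (𝕜 := ℝ) Γ⁻¹
          ((WithLp.equiv 2 (Fin 3 → ℝ)).symm (fun i => psat Pb (q i)))) :
    ‖ωv‖ ≤ Mω :=
  virtual_control_norm_bound_general q0 q hunit Γ hΓ Mω Pb hMω hPb ωv hωv
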